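/- arXiv:1303.5001 — 2 statements merged into one kernel-verified Lean document; each statement's English description precedes it below -/
import Mathlib

section
/- Let k ≥ 2 and let B be a basic set of [k]^{<ℕ}. The generating sequence (s, F₀, …, F_{ℓ−1}) of B is unique: if (s', F'₀, …, F'_{ℓ'−1}) generates the same set B, then ℓ' = ℓ, s' = s, and F'ᵢ = Fᵢ for all i. -/
/-- A flat set: at least two words, all of the same length. -/
def IsFlat (k : ℕ) (F : Finset (List (Fin k))) : Prop :=
  2 ≤ F.card ∧ ∃ n, ∀ w ∈ F, w.length = n

/-- The infimum (longest common initial segment) of `F` is the empty word. -/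
def InfEmpty (k : ℕ) (F : Finset (List (Fin k))) : Prop :=
  ∀ u : List (Fin k), (∀ w ∈ F, u <+: w) → u = []

/-- The basic set generated by `(s, F₀,…,F_{ℓ−1})`:
`B = {s} ∪ ⋃_{i<ℓ} (s⌢F₀⌢…⌢Fᵢ)`, where `s⌢F₀⌢…⌢Fᵢ` is the set of all concatenations
`s⌢u₀⌢…⌢uᵢ` with `uⱼ ∈ Fⱼ`. -/
def basicSet (k : ℕ) (s : List (Fin k)) (Fs : List (Finset (List (Fin k)))) :
    Set (List (Fin k)) :=
  {s} ∪ ⋃ i ∈ Set.Iio Fs.length,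
    (Fs.take (i + 1)).foldl
      (fun A F => {x | ∃ u ∈ A, ∃ v ∈ F, x = u ++ v}) {s}

/-! The base word `s` is the least element of a basic set `B` in the prefix order, so `B`
determines it. The words of a flat set have a common length, so none is a proper prefix of
another; hence `F₀` is recovered as the set of minimal `v ≠ []` with `s ++ v ∈ B`, and for
`v ∈ F₀` the elements of `B` extending `s ++ v` form the basic set generated by
`(s ++ v, F₁, …)`. Induction on `ℓ` concludes. -/

open List

section Concatenation

variable {α : Type*}

def appendStep (A : Set (List α)) (F : Finset (List α)) : Set (List α) :=
  {x | ∃ u ∈ A, ∃ v ∈ F, x = u ++ v}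

lemma appendStep_iUnion {ι : Sort*} (A : ι → Set (List α)) (F : Finset (List α)) :
    appendStep (⋃ i, A i) F = ⋃ i, appendStep (A i) F := by
  ext x
  simp only [appendStep, Set.mem_iUnion, Set.mem_ofPred_eq]
  grind

lemma foldl_appendStep_iUnion {ι : Sort*} (L : List (Finset (List α)))
    (A : ι → Set (List α)) :
    L.foldl appendStep (⋃ i, A i) = ⋃ i, L.foldl appendStep (A i) := by
  induction L generalizing A with
  | nil => rfl
  | cons F L ih => rw [foldl_cons, appendStep_iUnion, ih]; rfl

lemma appendStep_singleton (s : List α) (F : Finset (List α)) :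
    appendStep {s} F = ⋃ v ∈ F, {s ++ v} := by
  ext x
  simp [appendStep]

lemma mem_foldl_appendStep_cons {s x : List α} {F : Finset (List α)}
    {L : List (Finset (List α))} :
    x ∈ (F :: L).foldl appendStep {s} ↔ ∃ v ∈ F, x ∈ L.foldl appendStep {s ++ v} := by
  simp [appendStep_singleton, foldl_appendStep_iUnion]

end Concatenation

section BasicSet

variable {k : ℕ}

lemma basicSet_eq_foldl_appendStep (s : List (Fin k)) (L : List (Finset (List (Fin k)))) :
    basicSet k s L = {s} ∪ ⋃ i ∈ Set.Iio L.length, (L.take (i + 1)).foldl appendStep {s} :=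
  rfl

lemma basicSet_nil (s : List (Fin k)) : basicSet k s [] = {s} := by
  simp [basicSet]

lemma basicSet_cons (s : List (Fin k)) (F : Finset (List (Fin k)))
    (L : List (Finset (List (Fin k)))) :
    basicSet k s (F :: L) = {s} ∪ ⋃ v ∈ F, basicSet k (s ++ v) L := by
  ext x
  simp only [basicSet_eq_foldl_appendStep, length_cons, Set.mem_union, Set.mem_iUnion,
    Set.mem_Iio, take_succ_cons, mem_foldl_appendStep_cons, Set.mem_singleton_iff, exists_prop]
  rw [Nat.exists_lt_succ_left]
  simp only [take_zero, foldl_nil, Set.mem_singleton_iff]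
  grind

lemma self_mem_basicSet (s : List (Fin k)) (L : List (Finset (List (Fin k)))) :
    s ∈ basicSet k s L := Or.inl rfl

lemma prefix_of_mem_basicSet {s x : List (Fin k)} {L : List (Finset (List (Fin k)))}
    (hx : x ∈ basicSet k s L) : s <+: x := by
  induction L generalizing s with
  | nil =>
    rw [basicSet_nil, Set.mem_singleton_iff] at hx
    rw [hx]
  | cons F L ih =>
    rw [basicSet_cons] at hx
    simp only [Set.mem_union, Set.mem_singleton_iff, Set.mem_iUnion] at hx
    rcases hx with rfl | ⟨v, -, hx⟩
    · exact prefix_rfl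
    · exact (prefix_append s v).trans (ih hx)

variable {F G : Finset (List (Fin k))}

lemma IsFlat.nonempty (hF : IsFlat k F) : F.Nonempty :=
  Finset.card_pos.1 (by have := hF.1; omega)

lemma IsFlat.eq_of_prefix (hF : IsFlat k F) {v w : List (Fin k)} (hv : v ∈ F) (hw : w ∈ F)
    (h : v <+: w) : v = w := by
  obtain ⟨-, n, hn⟩ := hF
  exact h.eq_of_length ((hn v hv).trans (hn w hw).symm)

lemma IsFlat.ne_nil (hF : IsFlat k F) {w : List (Fin k)} (hw : w ∈ F) : w ≠ [] := by
  rintro rfl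
  obtain ⟨v, hv, hne⟩ := F.exists_mem_ne hF.1 []
  exact hne (hF.eq_of_prefix hw hv nil_prefix).symm

lemma append_mem_basicSet_cons (s : List (Fin k)) (L : List (Finset (List (Fin k))))
    {v : List (Fin k)} (hv : v ∈ F) : s ++ v ∈ basicSet k s (F :: L) := by
  rw [basicSet_cons]
  exact Or.inr (Set.mem_biUnion hv (self_mem_basicSet _ _))

lemma basicSet_ne_basicSet_cons (hG : IsFlat k G) (s : List (Fin k))
    (L : List (Finset (List (Fin k)))) : basicSet k s [] ≠ basicSet k s (G :: L) := by
  intro h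
  obtain ⟨w, hw⟩ := hG.nonempty
  have hmem := append_mem_basicSet_cons s L hw
  rw [← h, basicSet_nil, Set.mem_singleton_iff, append_right_eq_self] at hmem
  exact hG.ne_nil hw hmem

lemma exists_prefix_of_append_mem_basicSet_cons {s v : List (Fin k)}
    {L : List (Finset (List (Fin k)))} (hv : v ≠ []) (h : s ++ v ∈ basicSet k s (G :: L)) :
    ∃ w ∈ G, w <+: v := by
  rw [basicSet_cons] at h
  simp only [Set.mem_union, Set.mem_singleton_iff, append_right_eq_self, Set.mem_iUnion] at h
  obtain hv' | ⟨w, hw, hmem⟩ := h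
  · exact absurd hv' hv
  · exact ⟨w, hw, (prefix_append_right_inj s).1 (prefix_of_mem_basicSet hmem)⟩

lemma basicSet_append_eq_sep (hF : IsFlat k F) (s : List (Fin k))
    (L : List (Finset (List (Fin k)))) {v : List (Fin k)} (hv : v ∈ F) :
    basicSet k (s ++ v) L = {x ∈ basicSet k s (F :: L) | s ++ v <+: x} := by
  ext x
  constructor
  · intro hx
    rw [basicSet_cons]
    exact ⟨Or.inr (Set.mem_biUnion hv hx), prefix_of_mem_basicSet hx⟩
  · rintro ⟨hx, hvx⟩
    rw [basicSet_cons] at hx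
    simp only [Set.mem_union, Set.mem_singleton_iff, Set.mem_iUnion] at hx
    obtain rfl | ⟨w, hw, hwx⟩ := hx
    · exact absurd (by simpa using hvx.length_le) (hF.ne_nil hv)
    · have hvw : v = w := by
        rcases prefix_or_prefix_of_prefix hvx (prefix_of_mem_basicSet hwx) with h | h
        · exact hF.eq_of_prefix hv hw ((prefix_append_right_inj s).1 h)
        · exact (hF.eq_of_prefix hw hv ((prefix_append_right_inj s).1 h)).symm
      rwa [hvw]

lemma subset_of_basicSet_cons_eq (hF : IsFlat k F) (hG : IsFlat k G) {s : List (Fin k)}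
    {L L' : List (Finset (List (Fin k)))} (h : basicSet k s (F :: L) = basicSet k s (G :: L')) :
    F ⊆ G := by
  intro v hv
  have hvG := append_mem_basicSet_cons s L hv
  rw [h] at hvG
  obtain ⟨w, hw, hwv⟩ := exists_prefix_of_append_mem_basicSet_cons (hF.ne_nil hv) hvG
  have hwF := append_mem_basicSet_cons s L' hw
  rw [← h] at hwF
  obtain ⟨v', hv', hv'w⟩ := exists_prefix_of_append_mem_basicSet_cons (hG.ne_nil hw) hwF
  have hv'v : v' = v := hF.eq_of_prefix hv' hv (hv'w.trans hwv)
  rw [hv'v] at hv'w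
  rwa [← antisymm hwv hv'w]

theorem eq_of_basicSet_eq {s : List (Fin k)} {L L' : List (Finset (List (Fin k)))}
    (hL : ∀ F ∈ L, IsFlat k F) (hL' : ∀ F ∈ L', IsFlat k F)
    (h : basicSet k s L = basicSet k s L') : L = L' := by
  induction L generalizing s L' with
  | nil =>
    cases L' with
    | nil => rfl
    | cons G L' => exact absurd h (basicSet_ne_basicSet_cons (hL' G mem_cons_self) s L')
  | cons F L ih =>
    cases L' with
    | nil => exact absurd h.symm (basicSet_ne_basicSet_cons (hL F mem_cons_self) s L)
    | cons G L' =>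
      have hF := hL F mem_cons_self
      have hG := hL' G mem_cons_self
      have hFG : F = G :=
        (subset_of_basicSet_cons_eq hF hG h).antisymm (subset_of_basicSet_cons_eq hG hF h.symm)
      subst hFG
      obtain ⟨v, hv⟩ := hF.nonempty
      have hLL' : basicSet k (s ++ v) L = basicSet k (s ++ v) L' := by
        rw [basicSet_append_eq_sep hF s L hv, basicSet_append_eq_sep hF s L' hv, h]
      rw [ih (fun F' hF' => hL F' (mem_cons_of_mem F hF'))
        (fun F' hF' => hL' F' (mem_cons_of_mem F hF')) hLL']

end BasicSet

theorem stmt_13_general (k : ℕ) (s s' : List (Fin k))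
    (Fs Fs' : List (Finset (List (Fin k))))
    (hflat : ∀ F ∈ Fs, IsFlat k F ∧ InfEmpty k F)
    (hflat' : ∀ F ∈ Fs', IsFlat k F ∧ InfEmpty k F)
    (heq : basicSet k s Fs = basicSet k s' Fs') :
    s = s' ∧ Fs = Fs' := by
  have hss' : s = s' := by
    have hs' : s' ∈ basicSet k s Fs := heq ▸ self_mem_basicSet s' Fs'
    have hs : s ∈ basicSet k s' Fs' := heq ▸ self_mem_basicSet s Fs
    exact antisymm (prefix_of_mem_basicSet hs') (prefix_of_mem_basicSet hs)
  subst hss'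
  exact ⟨rfl, eq_of_basicSet_eq (fun F hF => (hflat F hF).1) (fun F hF => (hflat' F hF).1) heq⟩

/-- The generating sequence `(s, F₀,…,F_{ℓ−1})` of a basic set is
unique: if two generating sequences produce the same basic set, they coincide. -/
theorem stmt_13 (k : ℕ) (hk : 2 ≤ k) (s s' : List (Fin k))
    (Fs Fs' : List (Finset (List (Fin k))))
    (hFs : Fs ≠ []) (hFs' : Fs' ≠ [])
    (hflat : ∀ F ∈ Fs, IsFlat k F ∧ InfEmpty k F)
    (hflat' : ∀ F ∈ Fs', IsFlat k F ∧ InfEmpty k F)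
    (heq : basicSet k s Fs = basicSet k s' Fs') :
    s = s' ∧ Fs = Fs' :=
  stmt_13_general k s s' Fs Fs' hflat hflat' heq
end

section
/- For every k ≥ 2, every d ≥ m ≥ 1, and every r ≥ 1, the Carlson–Simpson number satisfies CS(k,d,m,r) ≤ GR(k,d+1,m+1,r) − 1, where GR is the Graham–Rothschild-type number for variable words: explicitly, if 𝐰 is an n-dimensional Carlson–Simpson sequence over k with n ≥ GR(k,d+1,m+1,r) − 1, then for every r-coloring of Subseq_m(𝐰) there exists 𝐯 ∈ Subseq_d(𝐰) with Subseq_m(𝐯) monochromatic. -/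
/-- Substitution of the letter `a ∈ [k]` for the variable (encoded as `none`)
in a variable word over `[k]`. -/
def subst (k : ℕ) (vw : List (Option (Fin k))) (a : Fin k) : List (Fin k) :=
  vw.map fun l => l.getD a

/-- A left variable word over `[k]`: its leftmost letter is the variable. -/
def IsLeftVar (k : ℕ) (vw : List (Option (Fin k))) : Prop := ∃ t, vw = none :: t

/-- `w⌢w₀(a₀)⌢…⌢w_{n−1}(a_{n−1})` for a Carlson–Simpson sequence `(w, ws)` and a word
of choices `as = (a₀,…,a_{n−1})` (with `n = as.length`). -/
def csApply (k : ℕ) (w : List (Fin k)) (ws : List (List (Option (Fin k))))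
    (as : List (Fin k)) : List (Fin k) :=
  w ++ (List.zipWith (subst k) ws as).flatten

/-- The Carlson–Simpson tree generated by the Carlson–Simpson sequence `(w, ws)`. -/
def genTree (k : ℕ) (w : List (Fin k)) (ws : List (List (Option (Fin k)))) :
    Set (List (Fin k)) :=
  {u | ∃ as : List (Fin k), as.length ≤ ws.length ∧ u = csApply k w ws as}

/-- Substitution of a letter `b ∈ [k] ∪ 𝓛` for the variable in a variable word over `[k]`,
yielding a word over `[k] ∪ 𝓛` (letters of `[k]` are `Sum.inl`, letters of `𝓛` are `Sum.inr`). -/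
def substG (k : ℕ) {L : Type*} (vw : List (Option (Fin k))) (b : Fin k ⊕ L) :
    List (Fin k ⊕ L) :=
  vw.map fun l => match l with | some a => Sum.inl a | none => b

/-- `𝐰(v) = w⌢w₀(a₀)⌢…⌢w_{m−1}(a_{m−1})` for `v = (a₀,…,a_{m−1})` a word over `[k] ∪ 𝓛`. -/
def applyG (k : ℕ) {L : Type*} (w : List (Fin k)) (ws : List (List (Option (Fin k))))
    (v : List (Fin k ⊕ L)) : List (Fin k ⊕ L) :=
  w.map Sum.inl ++ (List.zipWith (substG k) ws v).flatten

/-- The type of a word over `[k] ∪ 𝓛`: erase the letters of `[k]` and collapse runs of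
equal letters of `𝓛` to singletons. (Pure `[k]`-words get the empty list.) -/
def typeOf (k : ℕ) {L : Type*} [DecidableEq L] (u : List (Fin k ⊕ L)) : List L :=
  (u.filterMap Sum.getRight?).destutter (· ≠ ·)

/-- Substitution of `o ∈ [k] ∪ {x}` for the variable in a variable word over `[k]`. -/
def substO (k : ℕ) (vw : List (Option (Fin k))) (o : Option (Fin k)) :
    List (Option (Fin k)) :=
  vw.map fun l => match l with | none => o | some b => some b

/-- `(v, vs)` is a (`vs.length`-dimensional) Carlson–Simpson subsequence of `(w, ws)`:
there are letters `(aᵢ)` in `[k] ∪ {x}` and a strictly increasing sequence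
`n₀ < … < n_m ≤ dim 𝐰` with `a_{nᵢ} = x`, `a_j ∈ [k]` for `j < n₀`,
`v = w⌢w₀(a₀)⌢…⌢w_{n₀−1}(a_{n₀−1})` and
`vᵢ = w_{nᵢ}(a_{nᵢ})⌢…⌢w_{n_{i+1}−1}(a_{n_{i+1}−1})` (conditions (C1)–(C3)). -/
def IsCSSubseq (k : ℕ) (w : List (Fin k)) (ws : List (List (Option (Fin k))))
    (v : List (Fin k)) (vs : List (List (Option (Fin k)))) : Prop :=
  ∃ (a : ℕ → Option (Fin k)) (nf : ℕ → ℕ),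
    StrictMonoOn nf (Set.Iic vs.length) ∧
    nf vs.length ≤ ws.length ∧
    (∀ i < vs.length, a (nf i) = none) ∧
    (∀ j < nf 0, a j ≠ none) ∧
    v.map some = w.map some ++
      ((List.range (nf 0)).map fun j => substO k (ws.getD j []) (a j)).flatten ∧
    (∀ i < vs.length,
      vs.getD i [] =
        ((List.Ico (nf i) (nf (i + 1))).map fun j => substO k (ws.getD j []) (a j)).flatten)

/-- An `m`-variable word over `[k]`: a word over `[k] ∪ {x₀,…,x_{m−1}}` in which every
variable appears and, for `i < j`, all occurrences of `xᵢ` precede all occurrences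
of `xⱼ`. -/
def IsMVarWord (k m : ℕ) (u : List (Fin k ⊕ Fin m)) : Prop :=
  (∀ i : Fin m, Sum.inr i ∈ u) ∧
  ∀ p q : ℕ, ∀ i j : Fin m,
    u[p]? = some (Sum.inr i) → u[q]? = some (Sum.inr j) → i < j → p < q

/-- `u` is an `m`-variable subword of the `d`-variable word `y`: `u = y(β₀,…,β_{d−1})`
for some assignment `β` of letters of `[k] ∪ {x₀,…,x_{m−1}}` to the variables of `y`,
and `u` is an `m`-variable word. -/
def IsSubword (k d m : ℕ) (y : List (Fin k ⊕ Fin d)) (u : List (Fin k ⊕ Fin m)) : Prop :=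
  ∃ β : Fin d → (Fin k ⊕ Fin m),
    u = y.map (fun l => match l with | Sum.inl a => Sum.inl a | Sum.inr i => β i) ∧
    IsMVarWord k m u

/-- `N` witnesses the Graham–Rothschild-type property `GR(k,d,m,r)`: for every `n ≥ N`
and every `r`-coloring of the `m`-variable words over `[k]` of length `n` there is a
`d`-variable word `y` of length `n` all of whose `m`-variable subwords get the same
color. -/
def GRProp (k d m r N : ℕ) : Prop :=
  ∀ n, N ≤ n → ∀ c : List (Fin k ⊕ Fin m) → Fin r,
    ∃ y : List (Fin k ⊕ Fin d), y.length = n ∧ IsMVarWord k d y ∧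
      ∀ u u' : List (Fin k ⊕ Fin m), IsSubword k d m y u → IsSubword k d m y u' →
        c u = c u'

/-!
An `(m+1)`-variable word `u` of length at most `n + 1` encodes the `m`-dimensional
Carlson–Simpson subsequence `𝐰 ⊗ u*` of `𝐰`: the letters of `u` before its first variable are
substituted into the leading words of `𝐰`, the positions from the first `xᵢ` up to the first
`xᵢ₊₁` form the `i`-th word of the subsequence, and everything from the first `xₘ` on is
discarded. Colour `u` by the colour of `𝐰 ⊗ u*` and let `y` be a `(d+1)`-variable word of
length `n + 1` whose `(m+1)`-variable subwords are monochromatic. Then `𝐯 = 𝐰 ⊗ y*` works: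
every `m`-dimensional subsequence of `𝐯` is `𝐯 ⊗ b*` for an `(m+1)`-variable word `b` of
length `d + 1`, and `𝐯 ⊗ b* = 𝐰 ⊗ y(b)*`, where the subword `y(b)` substitutes the letters of
`b` for the variables of `y`.
-/

theorem List.map_some_reduceOption {α : Type*} {l : List (Option α)} (h : none ∉ l) :
    l.reduceOption.map some = l := by
  induction l with
  | nil => rfl
  | cons x l ih =>
    obtain ⟨b, rfl⟩ := Option.ne_none_iff_exists'.mp (List.ne_of_not_mem_cons h).symm
    rw [List.reduceOption_cons_of_some, List.map_cons, ih (List.not_mem_of_not_mem_cons h)]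

theorem List.getElem?_ofFn_eq_some {α : Type*} {n p : ℕ} {f : Fin n → α} {x : α} :
    (List.ofFn f)[p]? = some x ↔ ∃ h : p < n, f ⟨p, h⟩ = x := by
  rw [List.getElem?_ofFn]
  split_ifs with h <;> simp [h]

section VariableWords

variable {k : ℕ}

def letterAt {ι : Type*} (u : List (Fin k ⊕ ι)) (p : ℕ) : Option (Fin k) :=
  u[p]?.bind Sum.getLeft?

theorem letterAt_ofFn {ι : Type*} {n : ℕ} (β : Fin n → Fin k ⊕ ι) (j : Fin n) :
    letterAt (List.ofFn β) j = (β j).getLeft? := by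
  simp [letterAt]

variable {m : ℕ}

def firstOcc (u : List (Fin k ⊕ Fin (m + 1))) (i : ℕ) : ℕ :=
  u.findIdx fun l => decide (l = Sum.inr (Fin.ofNat (m + 1) i))

theorem firstOcc_coe (u : List (Fin k ⊕ Fin (m + 1))) (i : Fin (m + 1)) :
    firstOcc u i = u.findIdx fun l => decide (l = Sum.inr i) := by
  simp [firstOcc]

theorem firstOcc_le_of_getElem?_eq {u : List (Fin k ⊕ Fin (m + 1))} {p : ℕ} {i : Fin (m + 1)}
    (h : u[p]? = some (Sum.inr i)) : firstOcc u i ≤ p := by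
  obtain ⟨hp, hi⟩ := List.getElem?_eq_some_iff.mp h
  by_contra! hlt
  simpa [hi] using List.not_of_lt_findIdx hlt

theorem IsMVarWord.getElem?_firstOcc {u : List (Fin k ⊕ Fin (m + 1))}
    (hu : IsMVarWord k (m + 1) u) (i : Fin (m + 1)) : u[firstOcc u i]? = some (Sum.inr i) := by
  rw [firstOcc_coe]
  have hlt := List.findIdx_lt_length_of_exists (p := fun l => decide (l = Sum.inr i))
    ⟨_, hu.1 i, by simp⟩
  rw [List.getElem?_eq_getElem hlt]
  simpa using List.findIdx_getElem (w := hlt)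

end VariableWords

namespace IsMVarWord

variable {k m : ℕ} {u : List (Fin k ⊕ Fin (m + 1))}

theorem lt_firstOcc_of_getElem?_eq (hu : IsMVarWord k (m + 1) u) {p : ℕ} {i j : Fin (m + 1)}
    (h : u[p]? = some (Sum.inr i)) (hij : i < j) : p < firstOcc u j :=
  hu.2 _ _ _ _ h (hu.getElem?_firstOcc j) hij

theorem firstOcc_lt_length (hu : IsMVarWord k (m + 1) u) (i : Fin (m + 1)) :
    firstOcc u i < u.length :=
  (List.getElem?_eq_some_iff.mp (hu.getElem?_firstOcc i)).1

theorem firstOcc_strictMonoOn (hu : IsMVarWord k (m + 1) u) :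
    StrictMonoOn (firstOcc u) (Set.Iic m) := fun i hi j hj hij =>
  hu.lt_firstOcc_of_getElem?_eq (hu.getElem?_firstOcc ⟨i, Nat.lt_succ_of_le hi⟩)
    (j := ⟨j, Nat.lt_succ_of_le hj⟩) hij

theorem firstOcc_mono (hu : IsMVarWord k (m + 1) u) {i j : ℕ} (hij : i ≤ j) (hj : j ≤ m) :
    firstOcc u i ≤ firstOcc u j :=
  hu.firstOcc_strictMonoOn.monotoneOn (hij.trans hj) hj hij

theorem getElem?_ne_inr_of_lt_firstOcc_zero (hu : IsMVarWord k (m + 1) u) {p : ℕ}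
    (hp : p < firstOcc u 0) (i : Fin (m + 1)) : u[p]? ≠ some (Sum.inr i) := fun h => by
  have := hu.firstOcc_mono (Nat.zero_le i) (Nat.lt_succ_iff.mp i.isLt)
  have := firstOcc_le_of_getElem?_eq h
  omega

theorem letterAt_ne_none_of_lt_firstOcc_zero (hu : IsMVarWord k (m + 1) u) {p : ℕ}
    (hp : p < firstOcc u 0) : letterAt u p ≠ none := by
  have hlen : p < u.length := hp.trans (hu.firstOcc_lt_length 0)
  cases hl : u[p] with
  | inl c => simp [letterAt, List.getElem?_eq_getElem hlen, hl]
  | inr i =>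
    exact absurd (by rw [List.getElem?_eq_getElem hlen, hl])
      (hu.getElem?_ne_inr_of_lt_firstOcc_zero hp i)

theorem val_eq_of_getElem?_eq_inr (hu : IsMVarWord k (m + 1) u) {p j : ℕ} {i : Fin (m + 1)}
    (h : u[p]? = some (Sum.inr i)) (hj : j < m) (hjp : firstOcc u j ≤ p)
    (hpj : p < firstOcc u (j + 1)) : (i : ℕ) = j := by
  have hip := firstOcc_le_of_getElem?_eq h
  rcases lt_trichotomy (i : ℕ) j with hlt | heq | hgt
  · have : p < firstOcc u j := hu.lt_firstOcc_of_getElem?_eq h (j := ⟨j, by omega⟩) hlt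
    omega
  · exact heq
  · have : firstOcc u (j + 1) ≤ firstOcc u i := hu.firstOcc_mono hgt (Nat.lt_succ_iff.mp i.isLt)
    omega

theorem map_elim {d : ℕ} {y : List (Fin k ⊕ Fin d)} {β : Fin d → Fin k ⊕ Fin m}
    (hy : IsMVarWord k d y) (hβ : IsMVarWord k m (List.ofFn β)) :
    IsMVarWord k m (y.map (Sum.elim Sum.inl β)) := by
  constructor
  · intro t
    obtain ⟨i, hi⟩ := List.mem_ofFn.mp (hβ.1 t)
    exact List.mem_map.mpr ⟨_, hy.1 i, by simp [hi]⟩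
  · intro p q i j hp hq hij
    obtain ⟨lp, hyp, hlp⟩ := Option.map_eq_some_iff.mp (List.getElem?_map ▸ hp)
    obtain ⟨lq, hyq, hlq⟩ := Option.map_eq_some_iff.mp (List.getElem?_map ▸ hq)
    cases lp with
    | inl _ => simp at hlp
    | inr ip =>
      cases lq with
      | inl _ => simp at hlq
      | inr iq =>
        exact hy.2 p q ip iq hyp hyq (hβ.2 ip iq i j (by simpa using hlp) (by simpa using hlq) hij)

end IsMVarWord

theorem substO_substO {k : ℕ} (vw : List (Option (Fin k))) (o o' : Option (Fin k)) :
    substO k (substO k vw o) o' = substO k vw (o.or o') := by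
  simp only [substO, List.map_map]
  congr 1
  funext l
  cases l <;> cases o <;> rfl

section CSBlocks

variable {k : ℕ} (ws : List (List (Option (Fin k))))

/-- `w_s(a_s)⌢⋯⌢w_{t−1}(a_{t−1})`, where `a j = none` keeps the variable of `w_j`. -/
def csBlock (a : ℕ → Option (Fin k)) (s t : ℕ) : List (Option (Fin k)) :=
  ((List.Ico s t).map fun j => substO k (ws.getD j []) (a j)).flatten

theorem csBlock_append (a : ℕ → Option (Fin k)) {s t r : ℕ} (hst : s ≤ t) (htr : t ≤ r) :
    csBlock ws a s t ++ csBlock ws a t r = csBlock ws a s r := by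
  rw [csBlock, csBlock, csBlock, ← List.flatten_append, ← List.map_append,
    List.Ico.append_consecutive hst htr]

theorem csBlock_congr {a a' : ℕ → Option (Fin k)} {s t : ℕ}
    (h : ∀ j, s ≤ j → j < t → a j = a' j) : csBlock ws a s t = csBlock ws a' s t := by
  refine congrArg List.flatten (List.map_congr_left fun j hj => ?_)
  rw [List.Ico.mem] at hj
  rw [h j hj.1 hj.2]

theorem substO_csBlock (a : ℕ → Option (Fin k)) (s t : ℕ) (o : Option (Fin k)) :
    substO k (csBlock ws a s t) o = csBlock ws (fun j => (a j).or o) s t := by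
  simp only [csBlock, substO, List.map_flatten, List.map_map]
  congr 2
  funext j
  exact substO_substO _ _ _

theorem flatten_map_csBlock (a : ℕ → Option (Fin k)) {g : ℕ → ℕ} {s t : ℕ} (hst : s ≤ t)
    (hg : MonotoneOn g (Set.Icc s t)) :
    ((List.Ico s t).map fun j => csBlock ws a (g j) (g (j + 1))).flatten =
      csBlock ws a (g s) (g t) := by
  induction t, hst using Nat.le_induction with
  | base => simp [csBlock]
  | succ t hst ih =>
    have hg' : MonotoneOn g (Set.Icc s t) := hg.mono (Set.Icc_subset_Icc_right (by omega))
    rw [← List.Ico.append_consecutive hst t.le_succ, List.Ico.succ_singleton, List.map_append,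
      List.flatten_append, ih hg', List.map_singleton, List.flatten_singleton,
      csBlock_append ws a (hg ⟨le_rfl, by omega⟩ ⟨hst, by omega⟩ hst)
        (hg ⟨hst, by omega⟩ ⟨by omega, le_rfl⟩ t.le_succ)]

theorem none_notMem_csBlock {a : ℕ → Option (Fin k)} {s t : ℕ}
    (h : ∀ j, s ≤ j → j < t → a j ≠ none) : none ∉ csBlock ws a s t := by
  simp only [csBlock, List.mem_flatten, List.mem_map, List.Ico.mem]
  rintro ⟨_, ⟨j, ⟨hsj, hjt⟩, rfl⟩, hmem⟩
  obtain ⟨l, -, hl⟩ := List.mem_map.mp hmem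
  obtain ⟨c, hc⟩ := Option.ne_none_iff_exists'.mp (h j hsj hjt)
  cases l <;> simp [hc] at hl

end CSBlocks

theorem isCSSubseq_iff {k : ℕ} {w v : List (Fin k)} {ws vs : List (List (Option (Fin k)))} :
    IsCSSubseq k w ws v vs ↔ ∃ (a : ℕ → Option (Fin k)) (nf : ℕ → ℕ),
      StrictMonoOn nf (Set.Iic vs.length) ∧ nf vs.length ≤ ws.length ∧
      (∀ i < vs.length, a (nf i) = none) ∧ (∀ j < nf 0, a j ≠ none) ∧
      v.map some = w.map some ++ csBlock ws a 0 (nf 0) ∧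
      ∀ i < vs.length, vs.getD i [] = csBlock ws a (nf i) (nf (i + 1)) := by
  simp only [IsCSSubseq, csBlock, List.Ico.zero_bot]

section SubseqOfWord

variable {k m : ℕ} (w : List (Fin k)) (ws : List (List (Option (Fin k))))

/-- `𝐰 ⊗ u*`. -/
def subseqOfWord (u : List (Fin k ⊕ Fin (m + 1))) :
    List (Fin k) × List (List (Option (Fin k))) :=
  (w ++ (csBlock ws (letterAt u) 0 (firstOcc u 0)).reduceOption,
    (List.range m).map fun i => csBlock ws (letterAt u) (firstOcc u i) (firstOcc u (i + 1)))

theorem subseqOfWord_fst (u : List (Fin k ⊕ Fin (m + 1))) :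
    (subseqOfWord w ws u).1 = w ++ (csBlock ws (letterAt u) 0 (firstOcc u 0)).reduceOption :=
  rfl

theorem length_subseqOfWord_snd (u : List (Fin k ⊕ Fin (m + 1))) :
    (subseqOfWord w ws u).2.length = m := by
  simp [subseqOfWord]

theorem getD_subseqOfWord_snd (u : List (Fin k ⊕ Fin (m + 1))) {i : ℕ} (hi : i < m) :
    (subseqOfWord w ws u).2.getD i [] =
      csBlock ws (letterAt u) (firstOcc u i) (firstOcc u (i + 1)) := by
  simp [subseqOfWord, hi]

theorem isCSSubseq_subseqOfWord {u : List (Fin k ⊕ Fin (m + 1))} (hu : IsMVarWord k (m + 1) u)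
    (hlen : u.length ≤ ws.length + 1) :
    IsCSSubseq k w ws (subseqOfWord w ws u).1 (subseqOfWord w ws u).2 := by
  rw [isCSSubseq_iff, length_subseqOfWord_snd]
  have hpre : ∀ j < firstOcc u 0, letterAt u j ≠ none := fun j hj =>
    hu.letterAt_ne_none_of_lt_firstOcc_zero hj
  refine ⟨letterAt u, firstOcc u, hu.firstOcc_strictMonoOn, ?_, fun i hi => ?_, hpre, ?_,
    fun i hi => getD_subseqOfWord_snd w ws u hi⟩
  · have := hu.firstOcc_lt_length (Fin.last m)
    rw [Fin.val_last] at this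
    omega
  · simp [letterAt, hu.getElem?_firstOcc ⟨i, by omega⟩]
  · rw [subseqOfWord, List.map_append,
      List.map_some_reduceOption (none_notMem_csBlock ws fun j _ hj => hpre j hj)]

end SubseqOfWord

section Composition

variable {k d m : ℕ} {y : List (Fin k ⊕ Fin (d + 1))} {β : Fin (d + 1) → Fin k ⊕ Fin (m + 1)}

theorem firstOcc_ofFn_le (hβ : IsMVarWord k (m + 1) (List.ofFn β)) {t : ℕ} (ht : t ≤ m) :
    firstOcc (List.ofFn β) t ≤ d := by
  simpa [Nat.lt_succ_iff] using hβ.firstOcc_lt_length ⟨t, Nat.lt_succ_of_le ht⟩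

theorem firstOcc_map_elim (hy : IsMVarWord k (d + 1) y) (hβ : IsMVarWord k (m + 1) (List.ofFn β))
    {t : ℕ} (ht : t ≤ m) :
    firstOcc (y.map (Sum.elim Sum.inl β)) t = firstOcc y (firstOcc (List.ofFn β) t) := by
  let i : Fin (d + 1) := ⟨firstOcc (List.ofFn β) t, Nat.lt_succ_of_le (firstOcc_ofFn_le hβ ht)⟩
  have hβi : β i = Sum.inr ⟨t, Nat.lt_succ_of_le ht⟩ := by
    have := hβ.getElem?_firstOcc ⟨t, Nat.lt_succ_of_le ht⟩
    rw [List.getElem?_ofFn, dif_pos i.isLt] at this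
    exact Option.some_injective _ this
  refine le_antisymm (firstOcc_le_of_getElem?_eq (i := ⟨t, Nat.lt_succ_of_le ht⟩) ?_) ?_
  · rw [List.getElem?_map, hy.getElem?_firstOcc i]
    simp [hβi]
  · have hu := (hy.map_elim hβ).getElem?_firstOcc ⟨t, Nat.lt_succ_of_le ht⟩
    obtain ⟨l, hyl, hl⟩ := Option.map_eq_some_iff.mp (List.getElem?_map ▸ hu)
    cases l with
    | inl _ => simp at hl
    | inr j =>
      have hij : firstOcc (List.ofFn β) t ≤ j :=
        firstOcc_le_of_getElem?_eq (i := ⟨t, Nat.lt_succ_of_le ht⟩) (by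
          rw [List.getElem?_ofFn, dif_pos j.isLt]
          exact congrArg some hl)
      exact (hy.firstOcc_mono hij (Nat.lt_succ_iff.mp j.isLt)).trans
        (firstOcc_le_of_getElem?_eq hyl)

theorem letterAt_map_elim {p : ℕ} (hp : p < y.length) {j : Fin (d + 1)}
    (hblock : ∀ i, y[p]? = some (Sum.inr i) → i = j) :
    letterAt (y.map (Sum.elim Sum.inl β)) p = (letterAt y p).or (β j).getLeft? := by
  have hyp : y[p]? = some y[p] := List.getElem?_eq_getElem hp
  cases hl : y[p] with
  | inl c => simp [letterAt, hyp, hl]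
  | inr i =>
    rw [hl] at hyp
    simp [letterAt, hyp, hblock i hyp]

theorem csBlock_subseqOfWord_snd (hy : IsMVarWord k (d + 1) y) (w : List (Fin k))
    (ws : List (List (Option (Fin k)))) {s t : ℕ} (hst : s ≤ t) (ht : t ≤ d) :
    csBlock (subseqOfWord w ws y).2 (letterAt (List.ofFn β)) s t =
      csBlock ws (letterAt (y.map (Sum.elim Sum.inl β))) (firstOcc y s) (firstOcc y t) := by
  rw [← flatten_map_csBlock ws _ hst (hy.firstOcc_strictMonoOn.monotoneOn.mono
    fun i hi => Set.mem_Iic.mpr (hi.2.trans ht))]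
  refine congrArg List.flatten (List.map_congr_left fun j hj => ?_)
  rw [List.Ico.mem] at hj
  have hjd : j < d := by omega
  rw [getD_subseqOfWord_snd w ws y hjd, substO_csBlock]
  refine csBlock_congr ws fun p hp1 hp2 => ?_
  have hplen : p < y.length := hp2.trans (hy.firstOcc_lt_length ⟨j + 1, by omega⟩)
  rw [letterAt_map_elim (j := ⟨j, by omega⟩) hplen
    fun i hi => Fin.ext (hy.val_eq_of_getElem?_eq_inr hi hjd hp1 hp2)]
  rw [show letterAt (List.ofFn β) j = (β ⟨j, by omega⟩).getLeft? from letterAt_ofFn β ⟨j, _⟩]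

theorem subseqOfWord_map_elim (hy : IsMVarWord k (d + 1) y)
    (hβ : IsMVarWord k (m + 1) (List.ofFn β)) (w : List (Fin k))
    (ws : List (List (Option (Fin k)))) :
    subseqOfWord w ws (y.map (Sum.elim Sum.inl β)) =
      subseqOfWord (subseqOfWord w ws y).1 (subseqOfWord w ws y).2 (List.ofFn β) := by
  refine Prod.ext ?_ (List.ext_getElem (by simp only [length_subseqOfWord_snd]) fun i hi hi' => ?_)
  · have hprefix : csBlock ws (letterAt y) 0 (firstOcc y 0) =
        csBlock ws (letterAt (y.map (Sum.elim Sum.inl β))) 0 (firstOcc y 0) :=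
      csBlock_congr ws fun p _ hp => by
        rw [letterAt_map_elim (j := 0) (hp.trans (hy.firstOcc_lt_length 0))
          fun i hi => absurd hi (hy.getElem?_ne_inr_of_lt_firstOcc_zero hp i)]
        exact (Option.or_eq_left_of_isSome (Option.isSome_iff_ne_none.mpr
          (hy.letterAt_ne_none_of_lt_firstOcc_zero hp))).symm
    simp only [subseqOfWord_fst]
    rw [csBlock_subseqOfWord_snd hy w ws (Nat.zero_le _) (firstOcc_ofFn_le hβ (Nat.zero_le m)),
      List.append_assoc, ← List.reduceOption_append, hprefix, csBlock_append ws _ (Nat.zero_le _)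
        (hy.firstOcc_mono (Nat.zero_le _) (firstOcc_ofFn_le hβ (Nat.zero_le m))),
      firstOcc_map_elim hy hβ (Nat.zero_le m)]
  · have him : i < m := by rwa [length_subseqOfWord_snd] at hi
    rw [← List.getD_eq_getElem _ [] hi', ← List.getD_eq_getElem _ [] hi,
      getD_subseqOfWord_snd _ _ _ him, getD_subseqOfWord_snd _ _ _ him,
      csBlock_subseqOfWord_snd hy w ws (hβ.firstOcc_mono i.le_succ him)
        (firstOcc_ofFn_le hβ him), firstOcc_map_elim hy hβ him.le, firstOcc_map_elim hy hβ him]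

end Composition

section Encoding

variable {k m : ℕ} {a : ℕ → Option (Fin k)} {nf : ℕ → ℕ}

def blockIndex (nf : ℕ → ℕ) (m j : ℕ) : Fin (m + 1) :=
  ⟨Nat.findGreatest (fun t => nf t ≤ j) m, Nat.lt_succ_of_le (Nat.findGreatest_le m)⟩

theorem blockIndex_apply (hnf : StrictMonoOn nf (Set.Iic m)) {t : ℕ} (ht : t ≤ m) :
    (blockIndex nf m (nf t) : ℕ) = t :=
  Nat.findGreatest_eq_iff.mpr
    ⟨ht, fun _ => le_rfl, fun _ hts hs => not_le.mpr (hnf ht hs hts)⟩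

theorem nf_blockIndex_le {j : ℕ} (h : nf 0 ≤ j) : nf (blockIndex nf m j) ≤ j :=
  Nat.findGreatest_spec (P := fun t => nf t ≤ j) (Nat.zero_le m) h

theorem lt_nf_blockIndex_succ {j : ℕ} (h : (blockIndex nf m j : ℕ) < m) :
    j < nf (blockIndex nf m j + 1) :=
  not_le.mp (Nat.findGreatest_is_greatest (P := fun t => nf t ≤ j) (lt_add_one _) h)

/-- The letters of the `(m+1)`-variable word `b` with `𝐰 ⊗ b* = 𝐯`, for the subsequence `𝐯`
of `𝐰` given by the letters `a` and the variable positions `nf` as in `IsCSSubseq`. -/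
def letterOfCS (a : ℕ → Option (Fin k)) (nf : ℕ → ℕ) (m j : ℕ) : Fin k ⊕ Fin (m + 1) :=
  if j < nf m then (a j).elim (Sum.inr (blockIndex nf m j)) Sum.inl else Sum.inr (Fin.last m)

theorem letterOfCS_nf (hnf : StrictMonoOn nf (Set.Iic m)) (hnone : ∀ i < m, a (nf i) = none)
    {t : ℕ} (ht : t ≤ m) : letterOfCS a nf m (nf t) = Sum.inr ⟨t, Nat.lt_succ_of_le ht⟩ := by
  rcases Nat.lt_or_eq_of_le ht with htm | rfl
  · rw [letterOfCS, if_pos (hnf ht (Set.mem_Iic.mpr le_rfl) htm), hnone t htm]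
    exact congrArg Sum.inr (Fin.ext (blockIndex_apply hnf ht))
  · rw [letterOfCS, if_neg (lt_irrefl _)]
    rfl

theorem letterOfCS_eq_inr (hpre : ∀ j < nf 0, a j ≠ none) {j : ℕ} {i : Fin (m + 1)}
    (h : letterOfCS a nf m j = Sum.inr i) : nf i ≤ j ∧ ((i : ℕ) < m → j < nf (i + 1)) := by
  unfold letterOfCS at h
  split_ifs at h with hj
  · cases ha : a j with
    | some c => simp [ha] at h
    | none =>
      have h0 : nf 0 ≤ j := not_lt.mp fun hj0 => hpre j hj0 ha
      obtain rfl : blockIndex nf m j = i := Sum.inr_injective (α := Fin k) (by simpa [ha] using h)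
      exact ⟨nf_blockIndex_le h0, lt_nf_blockIndex_succ⟩
  · obtain rfl : Fin.last m = i := Sum.inr_injective (α := Fin k) h
    exact ⟨by simpa using hj, fun him => absurd him (by simp)⟩

theorem getLeft?_letterOfCS {j : ℕ} (hj : j < nf m) :
    (letterOfCS a nf m j).getLeft? = a j := by
  rw [letterOfCS, if_pos hj]
  cases a j <;> rfl

variable {n : ℕ}

theorem isMVarWord_ofFn_letterOfCS (hnf : StrictMonoOn nf (Set.Iic m))
    (hnone : ∀ i < m, a (nf i) = none) (hpre : ∀ j < nf 0, a j ≠ none) (hle : nf m ≤ n) :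
    IsMVarWord k (m + 1) (List.ofFn fun j : Fin (n + 1) => letterOfCS a nf m j) := by
  refine ⟨fun t => List.mem_of_getElem? (List.getElem?_ofFn_eq_some.mpr ⟨?_,
    letterOfCS_nf hnf hnone (Nat.lt_succ_iff.mp t.isLt)⟩), fun p q i j hp hq hij => ?_⟩
  · have := hnf.monotoneOn (Nat.lt_succ_iff.mp t.isLt) (Set.mem_Iic.mpr le_rfl)
      (Nat.lt_succ_iff.mp t.isLt)
    omega
  · obtain ⟨_, hp⟩ := List.getElem?_ofFn_eq_some.mp hp
    obtain ⟨_, hq⟩ := List.getElem?_ofFn_eq_some.mp hq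
    have him : (i : ℕ) < m := lt_of_lt_of_le hij (Nat.lt_succ_iff.mp j.isLt)
    have hpi : p < nf (i + 1) := (letterOfCS_eq_inr hpre hp).2 him
    have hjq : nf j ≤ q := (letterOfCS_eq_inr hpre hq).1
    have : nf (i + 1) ≤ nf j :=
      hnf.monotoneOn (Set.mem_Iic.mpr him) (Set.mem_Iic.mpr (Nat.lt_succ_iff.mp j.isLt)) hij
    omega

theorem firstOcc_ofFn_letterOfCS (hnf : StrictMonoOn nf (Set.Iic m))
    (hnone : ∀ i < m, a (nf i) = none) (hpre : ∀ j < nf 0, a j ≠ none) (hle : nf m ≤ n)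
    {t : ℕ} (ht : t ≤ m) :
    firstOcc (List.ofFn fun j : Fin (n + 1) => letterOfCS a nf m j) t = nf t := by
  refine le_antisymm (firstOcc_le_of_getElem?_eq (i := ⟨t, Nat.lt_succ_of_le ht⟩)
    (List.getElem?_ofFn_eq_some.mpr ⟨?_, letterOfCS_nf hnf hnone ht⟩)) ?_
  · have := hnf.monotoneOn ht (Set.mem_Iic.mpr le_rfl) ht
    omega
  · obtain ⟨_, h⟩ := List.getElem?_ofFn_eq_some.mp
      ((isMVarWord_ofFn_letterOfCS hnf hnone hpre hle).getElem?_firstOcc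
        ⟨t, Nat.lt_succ_of_le ht⟩)
    exact (letterOfCS_eq_inr hpre h).1

theorem letterAt_ofFn_letterOfCS (hle : nf m ≤ n) {j : ℕ} (hj : j < nf m) :
    letterAt (List.ofFn fun j : Fin (n + 1) => letterOfCS a nf m j) j = a j := by
  rw [letterAt, List.getElem?_ofFn_eq_some.mpr ⟨by omega, rfl⟩, Option.bind_some,
    getLeft?_letterOfCS hj]

end Encoding

theorem exists_subseqOfWord_eq {k n m : ℕ} {w z : List (Fin k)}
    {ws zs : List (List (Option (Fin k)))} (h : IsCSSubseq k w ws z zs) (hn : ws.length = n)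
    (hm : zs.length = m) :
    ∃ β : Fin (n + 1) → Fin k ⊕ Fin (m + 1),
      IsMVarWord k (m + 1) (List.ofFn β) ∧ subseqOfWord w ws (List.ofFn β) = (z, zs) := by
  subst hn hm
  obtain ⟨a, nf, hnf, hle, hnone, hpre, hz, hzs⟩ := isCSSubseq_iff.mp h
  have hfirst {t : ℕ} (ht : t ≤ zs.length) := firstOcc_ofFn_letterOfCS hnf hnone hpre hle ht
  have hletters {s t : ℕ} (ht : t ≤ zs.length) :
      csBlock ws (letterAt (List.ofFn fun j : Fin (ws.length + 1) => letterOfCS a nf _ j)) s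
        (nf t) = csBlock ws a s (nf t) :=
    csBlock_congr ws fun j _ hj => letterAt_ofFn_letterOfCS hle
      (hj.trans_le (hnf.monotoneOn ht (Set.mem_Iic.mpr le_rfl) ht))
  refine ⟨_, isMVarWord_ofFn_letterOfCS hnf hnone hpre hle, Prod.ext ?_
    (List.ext_getElem (length_subseqOfWord_snd w ws _) fun i hi hi' => ?_)⟩
  · refine List.map_injective_iff.mpr (Option.some_injective _) ?_
    rw [hz, subseqOfWord_fst, hfirst (Nat.zero_le _), hletters (Nat.zero_le _), List.map_append,
      List.map_some_reduceOption (none_notMem_csBlock ws fun j _ hj => hpre j hj)]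
  · have him : i < zs.length := by rwa [length_subseqOfWord_snd] at hi
    rw [← List.getD_eq_getElem _ [] hi, ← List.getD_eq_getElem _ [] hi',
      getD_subseqOfWord_snd _ _ _ him, hzs i him, hfirst him.le, hfirst him, hletters him]

theorem exists_isSubword_subseqOfWord_eq {k d m : ℕ} {y : List (Fin k ⊕ Fin (d + 1))}
    (hy : IsMVarWord k (d + 1) y) (w : List (Fin k)) (ws : List (List (Option (Fin k))))
    {z : List (Fin k)} {zs : List (List (Option (Fin k)))} (hzs : zs.length = m)
    (h : IsCSSubseq k (subseqOfWord w ws y).1 (subseqOfWord w ws y).2 z zs) :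
    ∃ u, IsSubword k (d + 1) (m + 1) y u ∧ subseqOfWord w ws u = (z, zs) := by
  obtain ⟨β, hβ, hβz⟩ := exists_subseqOfWord_eq h (length_subseqOfWord_snd w ws y) hzs
  refine ⟨y.map (Sum.elim Sum.inl β), ⟨β, ?_, hy.map_elim hβ⟩, ?_⟩
  · exact congrArg (y.map ·) (funext fun l => by cases l <;> rfl)
  · rw [subseqOfWord_map_elim hy hβ, hβz]

theorem stmt_19_general (k d m r N : ℕ)
    (hGR : GRProp k (d + 1) (m + 1) r N)
    (w : List (Fin k)) (ws : List (List (Option (Fin k))))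
    (hn : N - 1 ≤ ws.length)
    (c : List (Fin k) × List (List (Option (Fin k))) → Fin r) :
    ∃ (v : List (Fin k)) (vs : List (List (Option (Fin k)))),
      vs.length = d ∧ IsCSSubseq k w ws v vs ∧
      ∀ (z z' : List (Fin k)) (zs zs' : List (List (Option (Fin k)))),
        zs.length = m → zs'.length = m →
        IsCSSubseq k v vs z zs → IsCSSubseq k v vs z' zs' →
        c (z, zs) = c (z', zs') := by
  obtain ⟨y, hylen, hy, hmono⟩ :=
    hGR (ws.length + 1) (by omega) fun u => c (subseqOfWord w ws u)
  refine ⟨_, _, length_subseqOfWord_snd w ws y, isCSSubseq_subseqOfWord w ws hy hylen.le,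
    fun z z' zs zs' hzs hzs' h h' => ?_⟩
  obtain ⟨u, hu, huz⟩ := exists_isSubword_subseqOfWord_eq hy w ws hzs h
  obtain ⟨u', hu', huz'⟩ := exists_isSubword_subseqOfWord_eq hy w ws hzs' h'
  rw [← huz, ← huz']
  exact hmono u u' hu hu'

/-- `CS(k,d,m,r) ≤ GR(k,d+1,m+1,r) − 1`: if `N` has the
`GR(k,d+1,m+1,r)` property and `𝐰 = (w, ws)` is an `n`-dimensional Carlson–Simpson
sequence over `k` with `n ≥ N − 1`, then for every `r`-coloring of `Subseq_m(𝐰)` there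
exists `𝐯 ∈ Subseq_d(𝐰)` such that `Subseq_m(𝐯)` is monochromatic. -/
theorem stmt_19 (k d m r N : ℕ) (hk : 2 ≤ k) (hm : 1 ≤ m) (hdm : m ≤ d) (hr : 1 ≤ r)
    (hGR : GRProp k (d + 1) (m + 1) r N)
    (w : List (Fin k)) (ws : List (List (Option (Fin k))))
    (hleft : ∀ vw ∈ ws, IsLeftVar k vw) (hn : N - 1 ≤ ws.length)
    (c : List (Fin k) × List (List (Option (Fin k))) → Fin r) :
    ∃ (v : List (Fin k)) (vs : List (List (Option (Fin k)))),
      vs.length = d ∧ IsCSSubseq k w ws v vs ∧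
      ∀ (z z' : List (Fin k)) (zs zs' : List (List (Option (Fin k)))),
        zs.length = m → zs'.length = m →
        IsCSSubseq k v vs z zs → IsCSSubseq k v vs z' zs' →
        c (z, zs) = c (z', zs') :=
  stmt_19_general k d m r N hGR w ws hn c
end
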